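/- Let q ≥ 2 be an integer, let S^q denote the unit sphere in ℝ^{q+1} equipped with its surface measure dz and geodesic distance d(z_1, z_2) = arccos⟨z_1, z_2⟩. Fix B > 1, an integer j ≥ 0, real numbers κ > 0 and τ > 2, a real number p ≥ 1, and a point ξ ∈ S^q. Suppose ψ : S^q → ℝ is a measurable function satisfying |ψ(z)| ≤ κ B^{qj/2} / (1 + B^{qj/2} d(z, ξ))^τ for all z ∈ S^q. Then there exists a constant C_p > 0, depending only on q, τ, κ, p (not on j or ξ), such that ∫_{S^q} |ψ(z)|^p dz ≤ C_p · B^{jq(p/2 − 1)}. -/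

import Mathlib

/-!
The localization bound gives `|ψ|^p ≤ (κN)^p (1 + N d(·, ξ))^{-τp}` with `N = B^{qj/2}`, so it
suffices to show `∫_{S^q} (1 + N d(z, ξ))^{-s} dz = O(N^{-2})` for `s = τp > 2`. By the layer-cake
formula this follows from the cap estimate `|{z : d(z, ξ) < r}| ≤ A r²` for all `r > 0`. For
`r ≤ 1` the cap is covered by the image of a `q`-ball of radius `2r` under the central projection
of the tangent plane at `ξ` onto the sphere, which is `1`-Lipschitz; this gives `O(r^q) ⊆ O(r²)`
as `q ≥ 2`. For `r > 1` it suffices that the sphere has finite measure, which holds because,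
being compact, it is covered by finitely many such caps. Reflections make all constants independent of `ξ`.
-/

open MeasureTheory Metric Set Module
open scoped RealInnerProductSpace ENNReal NNReal

theorem lintegral_Ioc_zero_one_rpow {r : ℝ} (hr : -1 < r) :
    ∫⁻ t in Ioc (0 : ℝ) 1, ENNReal.ofReal (t ^ r) = ENNReal.ofReal (1 / (r + 1)) := by
  have hint : IntegrableOn (fun t : ℝ => t ^ r) (Ioc 0 1) :=
    (intervalIntegrable_iff_integrableOn_Ioc_of_le zero_le_one).1
      (intervalIntegral.intervalIntegrable_rpow' hr)
  rw [← ofReal_integral_eq_lintegral_ofReal hint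
    ((ae_restrict_iff' measurableSet_Ioc).2 (ae_of_all _ fun t ht => Real.rpow_nonneg ht.1.le r)),
    ← intervalIntegral.integral_of_le zero_le_one, integral_rpow (Or.inl hr),
    Real.zero_rpow (by linarith), Real.one_rpow, sub_zero]

theorem lintegral_one_add_mul_rpow_neg_le {X : Type*} [MeasurableSpace X] (μ : Measure X)
    {d : X → ℝ} (hd : Measurable d) (hd0 : ∀ x, 0 ≤ d x) {A α s N : ℝ} (hA : 0 ≤ A)
    (hs : 0 < s) (hαs : α < s) (hN : 0 < N)
    (hμ : ∀ r > 0, μ {x | d x < r} ≤ ENNReal.ofReal (A * r ^ α)) :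
    ∫⁻ x, ENNReal.ofReal ((1 + N * d x) ^ (-s)) ∂μ ≤ ENNReal.ofReal (A * s / (s - α) / N ^ α) := by
  have hbase : ∀ x, 1 ≤ 1 + N * d x := fun x => by nlinarith [hd0 x]
  set f := fun x => (1 + N * d x) ^ (-s)
  have hf : Measurable f := ((hd.const_mul N).const_add 1).pow_const _
  have hdist : ∀ t ∈ Ioi (0 : ℝ), μ {x | t < f x} ≤ (Ioc 0 1).indicator
      (fun t => ENNReal.ofReal (A / N ^ α * t ^ (-(α / s)))) t := by
    intro t (ht : 0 < t)
    rcases le_or_gt t 1 with ht1 | ht1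
    · rw [indicator_of_mem (show t ∈ Ioc 0 1 from ⟨ht, ht1⟩)]
      have hsub : {x | t < f x} ⊆ {x | d x < t ^ (-s)⁻¹ / N} := fun x (hx : t < f x) => by
        rw [← Real.lt_rpow_inv_iff_of_neg (by linarith [hbase x]) ht (by linarith)] at hx
        rw [mem_ofPred_eq, lt_div_iff₀ hN]
        linarith
      refine (measure_mono hsub).trans ((hμ _ (by positivity)).trans_eq ?_)
      rw [Real.div_rpow (by positivity) hN.le, ← Real.rpow_mul ht.le]
      congr 1
      field_simp
    · rw [indicator_of_notMem (fun h => ht1.not_ge h.2)]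
      have hempty : {x | t < f x} = ∅ := eq_empty_of_forall_notMem fun x (hx : t < f x) =>
        ht1.not_ge (hx.le.trans (Real.rpow_le_one_of_one_le_of_nonpos (hbase x) (by linarith)))
      rw [hempty, measure_empty]
  calc ∫⁻ x, ENNReal.ofReal (f x) ∂μ = ∫⁻ t in Ioi 0, μ {x | t < f x} :=
        lintegral_eq_lintegral_meas_lt μ
          (ae_of_all _ fun x => Real.rpow_nonneg (by linarith [hbase x]) _) hf.aemeasurable
    _ ≤ ∫⁻ t in Ioi 0, (Ioc 0 1).indicator
          (fun t => ENNReal.ofReal (A / N ^ α * t ^ (-(α / s)))) t :=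
        setLIntegral_mono' measurableSet_Ioi hdist
    _ = ENNReal.ofReal (A / N ^ α) * ∫⁻ t in Ioc 0 1, ENNReal.ofReal (t ^ (-(α / s))) := by
        rw [lintegral_indicator measurableSet_Ioc, Measure.restrict_restrict measurableSet_Ioc,
          inter_eq_left.2 Ioc_subset_Ioi_self, ← lintegral_const_mul' _ _ ENNReal.ofReal_ne_top]
        exact setLIntegral_congr_fun measurableSet_Ioc fun t _ =>
          ENNReal.ofReal_mul (by positivity)
    _ = ENNReal.ofReal (A * s / (s - α) / N ^ α) := by
        rw [lintegral_Ioc_zero_one_rpow (by rw [neg_lt_neg_iff, div_lt_one hs]; exact hαs),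
          ← ENNReal.ofReal_mul (by positivity)]
        congr 1
        field_simp
        ring

theorem Real.sqrt_inv_cos_sq_sub_one_le {r : ℝ} (hr0 : 0 ≤ r) (hr1 : r ≤ 1) :
    √((Real.cos r)⁻¹ ^ 2 - 1) ≤ 2 * r := by
  have hcos : 1 / 2 ≤ Real.cos r := by nlinarith [Real.one_sub_sq_div_two_le_cos (x := r)]
  have hsin : Real.sin r ^ 2 ≤ r ^ 2 :=
    pow_le_pow_left₀ (Real.sin_nonneg_of_nonneg_of_le_pi hr0 (by linarith [Real.pi_gt_three]))
      (Real.sin_le hr0) 2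
  refine Real.sqrt_le_iff.2 ⟨by positivity, ?_⟩
  rw [inv_pow, sub_le_iff_le_add, inv_le_iff_one_le_mul₀ (by positivity)]
  nlinarith [Real.sin_sq_add_cos_sq r,
    mul_nonneg (sq_nonneg r) (by nlinarith : 0 ≤ Real.cos r ^ 2 - 1 / 4)]

theorem Real.rpow_le_mul_rpow_neg_of_le_div_rpow {a c x τ p : ℝ} (ha : 0 ≤ a) (hc : 0 ≤ c)
    (hx : 0 < x) (hp : 0 ≤ p) (h : a ≤ c / x ^ τ) : a ^ p ≤ c ^ p * x ^ (-(τ * p)) := by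
  rw [Real.rpow_neg hx.le, Real.rpow_mul hx.le, ← Real.inv_rpow (by positivity),
    ← Real.mul_rpow hc (by positivity)]
  exact Real.rpow_le_rpow ha h hp

section Sphere

variable {E : Type*} [NormedAddCommGroup E] [InnerProductSpace ℝ E]

theorem norm_inv_smul_sub_inv_smul_le {x y : E} (hx : 1 ≤ ‖x‖) (hy : 1 ≤ ‖y‖) :
    ‖‖x‖⁻¹ • x - ‖y‖⁻¹ • y‖ ≤ ‖x - y‖ := by
  have hxy : ⟪x, y⟫ ≤ ‖x‖ * ‖y‖ := real_inner_le_norm x y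
  rw [← sq_le_sq₀ (norm_nonneg _) (norm_nonneg _), norm_sub_sq_real, norm_sub_sq_real,
    norm_smul, norm_smul, real_inner_smul_left, real_inner_smul_right]
  simp only [Real.norm_eq_abs, abs_inv, abs_norm]
  field_simp
  nlinarith [mul_nonneg (sub_nonneg.2 hxy) (sub_nonneg.2 (one_le_mul_of_one_le_of_one_le hx hy)),
    mul_nonneg (mul_nonneg (norm_nonneg x) (norm_nonneg y)) (sq_nonneg (‖x‖ - ‖y‖))]

def sphereCap (ξ : E) (c : ℝ) : Set E := sphere 0 1 ∩ {z | c < ⟪z, ξ⟫}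

theorem LinearIsometryEquiv.image_sphereCap (R : E ≃ₗᵢ[ℝ] E) (ξ : E) (c : ℝ) :
    R '' sphereCap ξ c = sphereCap (R ξ) c := by
  rw [R.image_eq_preimage_symm]
  ext z
  simp only [sphereCap, mem_preimage, mem_inter_iff, mem_sphere_zero_iff_norm, mem_ofPred_eq,
    LinearIsometryEquiv.norm_map]
  rw [← R.inner_map_map, R.apply_symm_apply]

noncomputable def centralProjection (ξ : E) (w : (ℝ ∙ ξ)ᗮ) : E := ‖ξ + w‖⁻¹ • (ξ + w)

theorem one_le_norm_add_of_mem_orthogonal {ξ : E} (hξ : ‖ξ‖ = 1) (w : (ℝ ∙ ξ)ᗮ) :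
    1 ≤ ‖ξ + w‖ := by
  have h : ⟪ξ, (w : E)⟫ = 0 := Submodule.mem_orthogonal_singleton_iff_inner_right.1 w.2
  have := norm_add_sq_real ξ (w : E)
  rw [h, hξ] at this
  nlinarith [norm_nonneg (ξ + w), sq_nonneg ‖(w : E)‖]

theorem lipschitzWith_centralProjection {ξ : E} (hξ : ‖ξ‖ = 1) :
    LipschitzWith 1 (centralProjection ξ) := by
  refine LipschitzWith.of_dist_le_mul fun w v => ?_
  rw [NNReal.coe_one, one_mul, dist_eq_norm, dist_eq_norm]
  calc _ ≤ ‖(ξ + w) - (ξ + v)‖ :=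
        norm_inv_smul_sub_inv_smul_le (one_le_norm_add_of_mem_orthogonal hξ w)
          (one_le_norm_add_of_mem_orthogonal hξ v)
    _ = ‖w - v‖ := by rw [add_sub_add_left_eq_sub]; rfl

theorem sphereCap_subset_image_centralProjection {ξ : E} (hξ : ‖ξ‖ = 1) {c : ℝ} (hc : 0 < c) :
    sphereCap ξ c ⊆ centralProjection ξ '' closedBall 0 √(c⁻¹ ^ 2 - 1) := by
  rintro z ⟨hz, hcz⟩
  rw [mem_sphere_zero_iff_norm] at hz
  set t := ⟪z, ξ⟫
  have ht : 0 < t := hc.trans hcz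
  have hw : t⁻¹ • z - ξ ∈ (ℝ ∙ ξ)ᗮ := by
    rw [Submodule.mem_orthogonal_singleton_iff_inner_right, inner_sub_right, inner_smul_right,
      real_inner_comm, real_inner_self_eq_norm_sq, hξ]
    field_simp
    ring
  refine ⟨⟨_, hw⟩, ?_, ?_⟩
  · rw [mem_closedBall_zero_iff, Submodule.coe_norm]
    apply Real.le_sqrt_of_sq_le
    rw [norm_sub_sq_real, norm_smul, real_inner_smul_left, hz, hξ, Real.norm_eq_abs,
      abs_inv, abs_of_pos ht]
    field_simp
    rw [show ⟪z, ξ⟫ = t from rfl]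
    nlinarith [mul_pos (sub_pos.2 (show c < t from hcz)) (add_pos ht hc)]
  · rw [centralProjection, add_sub_cancel, norm_smul, Real.norm_eq_abs, abs_inv, abs_of_pos ht,
      hz, mul_one, inv_inv, smul_smul, mul_inv_cancel₀ ht.ne', one_smul]

theorem sphere_inter_arccos_lt_subset_sphereCap {ξ : E} (hξ : ‖ξ‖ = 1) {r : ℝ}
    (hr : r ≤ Real.pi) :
    sphere 0 1 ∩ {z | Real.arccos ⟪z, ξ⟫ < r} ⊆ sphereCap ξ (Real.cos r) := by
  rintro z ⟨hz, hzr⟩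
  refine ⟨hz, ?_⟩
  have hbound : |⟪z, ξ⟫| ≤ 1 := by
    simpa [mem_sphere_zero_iff_norm.1 hz, hξ] using abs_real_inner_le_norm z ξ
  have := Real.cos_lt_cos_of_nonneg_of_le_pi (Real.arccos_nonneg _) hr hzr
  rwa [Real.cos_arccos (abs_le.1 hbound).1 (abs_le.1 hbound).2] at this

variable [MeasurableSpace E] [BorelSpace E]

theorem hausdorffMeasure_sphereCap_le {q : ℕ} (hE : finrank ℝ E = q + 1) {ξ : E}
    (hξ : ‖ξ‖ = 1) {c : ℝ} (hc : 0 < c) :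
    μH[q] (sphereCap ξ c) ≤
      ENNReal.ofReal (√(c⁻¹ ^ 2 - 1) ^ q) * μH[q] (ball (0 : (ℝ ∙ ξ)ᗮ) 1) := by
  have : Fact (finrank ℝ E = q + 1) := ⟨hE⟩
  have : FiniteDimensional ℝ E := .of_fact_finrank_eq_succ q
  have hK : finrank ℝ (ℝ ∙ ξ)ᗮ = q :=
    Submodule.finrank_orthogonal_span_singleton (norm_ne_zero_iff.1 (hξ.trans_ne one_ne_zero))
  calc μH[q] (sphereCap ξ c)
      ≤ μH[q] (centralProjection ξ '' closedBall 0 √(c⁻¹ ^ 2 - 1)) :=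
        measure_mono (sphereCap_subset_image_centralProjection hξ hc)
    _ ≤ μH[q] (closedBall (0 : (ℝ ∙ ξ)ᗮ) √(c⁻¹ ^ 2 - 1)) := by
        simpa using (lipschitzWith_centralProjection hξ).hausdorffMeasure_image_le
          (Nat.cast_nonneg q) _
    _ = _ := by
        have := Measure.addHaar_closedBall μH[finrank ℝ (ℝ ∙ ξ)ᗮ] (0 : (ℝ ∙ ξ)ᗮ)
          (Real.sqrt_nonneg (c⁻¹ ^ 2 - 1))
        rwa [hK] at this

theorem exists_hausdorffMeasure_sphereCap_le {q : ℕ} (hE : finrank ℝ E = q + 1) :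
    ∃ V : ℝ≥0, ∀ ξ : E, ‖ξ‖ = 1 → ∀ c > 0,
      μH[q] (sphereCap ξ c) ≤ ENNReal.ofReal (√(c⁻¹ ^ 2 - 1) ^ q) * V := by
  have : Fact (finrank ℝ E = q + 1) := ⟨hE⟩
  have : FiniteDimensional ℝ E := .of_fact_finrank_eq_succ q
  have : Nontrivial E := Module.nontrivial_of_finrank_eq_succ hE
  obtain ⟨ξ₀, hξ₀⟩ := exists_norm_eq E zero_le_one
  have hV : μH[q] (ball (0 : (ℝ ∙ ξ₀)ᗮ) 1) ≠ ⊤ := by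
    have := measure_ball_lt_top (μ := μH[finrank ℝ (ℝ ∙ ξ₀)ᗮ]) (x := (0 : (ℝ ∙ ξ₀)ᗮ)) (r := 1)
    rw [Submodule.finrank_orthogonal_span_singleton (n := q)
      (norm_ne_zero_iff.1 (hξ₀.trans_ne one_ne_zero))] at this
    exact this.ne
  refine ⟨(μH[q] (ball (0 : (ℝ ∙ ξ₀)ᗮ) 1)).toNNReal, fun ξ hξ c hc => ?_⟩
  set R := Submodule.reflection (ℝ ∙ (ξ₀ - ξ))ᗮ
  have hRξ₀ : R ξ₀ = ξ := Submodule.reflection_sub (hξ₀.trans hξ.symm)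
  rw [← hRξ₀, ← R.image_sphereCap, R.isometry.hausdorffMeasure_image (Or.inl (Nat.cast_nonneg q)),
    ENNReal.coe_toNNReal hV]
  exact hausdorffMeasure_sphereCap_le hE hξ₀ hc

theorem hausdorffMeasure_sphere_lt_top {q : ℕ} (hE : finrank ℝ E = q + 1) :
    μH[q] (sphere (0 : E) 1) < ⊤ := by
  have : FiniteDimensional ℝ E := Module.finite_of_finrank_eq_succ hE
  obtain ⟨V, hV⟩ := exists_hausdorffMeasure_sphereCap_le hE
  obtain ⟨t, ht⟩ := (isCompact_sphere (0 : E) 1).elim_finite_subcover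
    (fun ξ : sphere (0 : E) 1 => {z | 1 / 2 < ⟪z, (ξ : E)⟫})
    (fun ξ => isOpen_lt continuous_const (continuous_id.inner continuous_const))
    (fun z hz => mem_iUnion.2 ⟨⟨z, hz⟩, by simp [mem_sphere_zero_iff_norm.1 hz]; norm_num⟩)
  have hcover : sphere (0 : E) 1 ⊆ ⋃ ξ ∈ t, sphereCap (ξ : E) (1 / 2) := fun z hz => by
    obtain ⟨ξ, hξt, hzξ⟩ := mem_iUnion₂.1 (ht hz)
    exact mem_iUnion₂.2 ⟨ξ, hξt, hz, hzξ⟩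
  calc μH[q] (sphere (0 : E) 1)
      ≤ ∑ ξ ∈ t, μH[q] (sphereCap (ξ : E) (1 / 2)) :=
        (measure_mono hcover).trans (measure_biUnion_finset_le _ _)
    _ < ⊤ := ENNReal.sum_lt_top.2 fun ξ _ => (hV ξ (mem_sphere_zero_iff_norm.1 ξ.2) _
        one_half_pos).trans_lt (ENNReal.mul_lt_top ENNReal.ofReal_lt_top ENNReal.coe_lt_top)

theorem exists_hausdorffMeasure_sphere_inter_arccos_lt_le {q : ℕ} (hE : finrank ℝ E = q + 1)
    (hq : 2 ≤ q) :
    ∃ A > 0, ∀ ξ : E, ‖ξ‖ = 1 → ∀ r > 0,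
      μH[q] (sphere (0 : E) 1 ∩ {z | Real.arccos ⟪z, ξ⟫ < r}) ≤ ENNReal.ofReal (A * r ^ 2) := by
  obtain ⟨V, hV⟩ := exists_hausdorffMeasure_sphereCap_le hE
  set S := μH[q] (sphere (0 : E) 1)
  refine ⟨2 ^ q * V + S.toReal + 1, by positivity, fun ξ hξ r hr => ?_⟩
  rcases le_or_gt r 1 with hr1 | hr1
  · calc μH[q] (sphere (0 : E) 1 ∩ {z | Real.arccos ⟪z, ξ⟫ < r})
        ≤ ENNReal.ofReal (√((Real.cos r)⁻¹ ^ 2 - 1) ^ q) * V :=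
          (measure_mono (sphere_inter_arccos_lt_subset_sphereCap hξ
            (hr1.trans (by linarith [Real.pi_gt_three])))).trans
          (hV ξ hξ _ (Real.cos_pos_of_le_one (by rwa [abs_of_pos hr])))
      _ ≤ ENNReal.ofReal (2 ^ q * V * r ^ 2) := by
          rw [← ENNReal.ofReal_coe_nnreal, ← ENNReal.ofReal_mul (by positivity)]
          apply ENNReal.ofReal_le_ofReal
          calc √((Real.cos r)⁻¹ ^ 2 - 1) ^ q * V ≤ (2 * r) ^ q * V := by
                gcongr; exact Real.sqrt_inv_cos_sq_sub_one_le hr.le hr1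
            _ ≤ 2 ^ q * V * r ^ 2 := by
                rw [mul_pow, mul_right_comm]
                gcongr 2 ^ q * V * ?_
                exact pow_le_pow_of_le_one hr.le hr1 hq
      _ ≤ _ := ENNReal.ofReal_le_ofReal (by gcongr; linarith [ENNReal.toReal_nonneg (a := S)])
  · calc μH[q] (sphere (0 : E) 1 ∩ {z | Real.arccos ⟪z, ξ⟫ < r})
        ≤ S := measure_mono inter_subset_left
      _ = ENNReal.ofReal S.toReal :=
          (ENNReal.ofReal_toReal (hausdorffMeasure_sphere_lt_top hE).ne).symm
      _ ≤ _ := ENNReal.ofReal_le_ofReal (by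
          have : 0 ≤ 2 ^ q * (V : ℝ) * r ^ 2 := by positivity
          nlinarith [mul_le_mul_of_nonneg_left (one_le_pow₀ hr1.le : 1 ≤ r ^ 2)
            (ENNReal.toReal_nonneg (a := S))])

theorem exists_lintegral_sphere_one_add_mul_arccos_rpow_neg_le {q : ℕ}
    (hE : finrank ℝ E = q + 1) (hq : 2 ≤ q) {s : ℝ} (hs : 2 < s) :
    ∃ D > 0, ∀ ξ : E, ‖ξ‖ = 1 → ∀ N > 0,
      ∫⁻ z in sphere 0 1, ENNReal.ofReal ((1 + N * Real.arccos ⟪z, ξ⟫) ^ (-s)) ∂μH[q] ≤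
        ENNReal.ofReal (D / N ^ 2) := by
  obtain ⟨A, hA, hμ⟩ := exists_hausdorffMeasure_sphere_inter_arccos_lt_le hE hq
  refine ⟨A * s / (s - 2), div_pos (mul_pos hA (by linarith)) (by linarith),
    fun ξ hξ N hN => ?_⟩
  have hd : Measurable fun z : E => Real.arccos ⟪z, ξ⟫ :=
    (Real.continuous_arccos.comp (continuous_id.inner continuous_const)).measurable
  have := lintegral_one_add_mul_rpow_neg_le (μH[q].restrict (sphere 0 1)) hd
    (fun z => Real.arccos_nonneg _) hA.le (by linarith) hs hN fun r hr => by
      rw [Measure.restrict_apply (measurableSet_lt hd measurable_const), inter_comm]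
      exact_mod_cast hμ ξ hξ r hr
  exact_mod_cast this

theorem exists_integral_sphere_rpow_abs_le {q : ℕ} (hE : finrank ℝ E = q + 1) (hq : 2 ≤ q)
    {τ κ p : ℝ} (hτ : 2 < τ) (hκ : 0 < κ) (hp : 1 ≤ p) :
    ∃ C > 0, ∀ N > 0, ∀ ξ : E, ‖ξ‖ = 1 → ∀ ψ : E → ℝ, Measurable ψ →
      (∀ z ∈ sphere (0 : E) 1, |ψ z| ≤ κ * N / (1 + N * Real.arccos ⟪z, ξ⟫) ^ τ) →
      ∫ z in sphere 0 1, |ψ z| ^ p ∂μH[q] ≤ C * N ^ (p - 2) := by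
  obtain ⟨D, hD, hdecay⟩ :=
    exists_lintegral_sphere_one_add_mul_arccos_rpow_neg_le hE hq (s := τ * p) (by nlinarith)
  refine ⟨κ ^ p * D, by positivity, fun N hN ξ hξ ψ hψ hbound => ?_⟩
  have hpt : ∀ z ∈ sphere (0 : E) 1, ENNReal.ofReal (|ψ z| ^ p) ≤ ENNReal.ofReal ((κ * N) ^ p) *
      ENNReal.ofReal ((1 + N * Real.arccos ⟪z, ξ⟫) ^ (-(τ * p))) := fun z hz => by
    have hx : 0 < 1 + N * Real.arccos ⟪z, ξ⟫ := by
      have := Real.arccos_nonneg ⟪z, ξ⟫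
      positivity
    rw [← ENNReal.ofReal_mul (by positivity)]
    exact ENNReal.ofReal_le_ofReal (Real.rpow_le_mul_rpow_neg_of_le_div_rpow (abs_nonneg _)
      (by positivity) hx (by linarith) (hbound z hz))
  rw [integral_eq_lintegral_of_nonneg_ae (ae_of_all _ fun z => by positivity)
    (hψ.abs.pow_const p).aestronglyMeasurable]
  refine ENNReal.toReal_le_of_le_ofReal (by positivity) ?_
  calc ∫⁻ z in sphere 0 1, ENNReal.ofReal (|ψ z| ^ p) ∂μH[q]
      ≤ ENNReal.ofReal ((κ * N) ^ p) *
          ∫⁻ z in sphere 0 1, ENNReal.ofReal ((1 + N * Real.arccos ⟪z, ξ⟫) ^ (-(τ * p))) ∂μH[q] :=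
        (setLIntegral_mono' isClosed_sphere.measurableSet hpt).trans_eq
          (lintegral_const_mul' _ _ ENNReal.ofReal_ne_top)
    _ ≤ ENNReal.ofReal ((κ * N) ^ p) * ENNReal.ofReal (D / N ^ 2) :=
        mul_le_mul_right (hdecay ξ hξ N hN) _
    _ = ENNReal.ofReal (κ ^ p * D * N ^ (p - 2)) := by
        rw [← ENNReal.ofReal_mul (by positivity), Real.mul_rpow hκ.le hN.le,
          Real.rpow_sub hN, Real.rpow_two]
        ring_nf

end Sphere

/-- **`L^p` bound for localized functions on the sphere.**
If `ψ` satisfies the needlet-type localization bound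
`|ψ(z)| ≤ κ B^{qj/2} / (1 + B^{qj/2} d(z,ξ))^τ` with `τ > 2` (where
`d(z,ξ) = arccos ⟪z,ξ⟫` is the geodesic distance and the sphere carries its surface
measure `μH[q]`), then for any real `p ≥ 1`,
`∫ |ψ(z)|^p dz ≤ C_p B^{jq(p/2-1)}` with `C_p` independent of `j` and `ξ`. -/
theorem localized_function_Lp_bound
    (q : ℕ) (hq : 2 ≤ q) (B τ κ p : ℝ) (hB : 1 < B) (hτ : 2 < τ) (hκ : 0 < κ)
    (hp : 1 ≤ p) :
    ∃ C > (0 : ℝ), ∀ (j : ℕ) (ξ : EuclideanSpace ℝ (Fin (q + 1))),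
      ξ ∈ Metric.sphere (0 : EuclideanSpace ℝ (Fin (q + 1))) 1 →
      ∀ ψ : EuclideanSpace ℝ (Fin (q + 1)) → ℝ, Measurable ψ →
      (∀ z ∈ Metric.sphere (0 : EuclideanSpace ℝ (Fin (q + 1))) 1,
        |ψ z| ≤ κ * B ^ ((q : ℝ) * j / 2) /
          (1 + B ^ ((q : ℝ) * j / 2) * Real.arccos ⟪z, ξ⟫) ^ τ) →
      ∫ z in (Metric.sphere (0 : EuclideanSpace ℝ (Fin (q + 1))) 1 : Set _),
          |ψ z| ^ p ∂(μH[(q : ℝ)])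
        ≤ C * B ^ ((j : ℝ) * q * (p / 2 - 1)) := by
  obtain ⟨C, hC, hLp⟩ := exists_integral_sphere_rpow_abs_le finrank_euclideanSpace_fin hq hτ hκ hp
  refine ⟨C, hC, fun j ξ hξ ψ hψ hbound => ?_⟩
  have hB0 : 0 < B := by linarith
  have hscale : (B ^ ((q : ℝ) * j / 2)) ^ (p - 2) = B ^ ((j : ℝ) * q * (p / 2 - 1)) := by
    rw [← Real.rpow_mul hB0.le]
    ring_nf
  rw [← hscale]
  exact hLp _ (by positivity) ξ (mem_sphere_zero_iff_norm.1 hξ) ψ hψ hbound
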